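/- arXiv:2002.12016 — 4 statements merged into one kernel-verified Lean document; each statement's English description precedes it below -/
import Mathlib

section
/- For ω > 0, ε > -1, a > 0 with cos(ω_ε a)·√(1+ε) ≠ i·sin(ω_ε a) where ω_ε = ω√(1+ε), the function u_T(x) = (√(1+ε)·cos(ω_ε(x−a)) + i·sin(ω_ε(x−a))) / (√(1+ε)·cos(ω_ε a) − i·sin(ω_ε a)) satisfies −u_T'' − ω²(1+ε)u_T = 0 on (0,a), u_T(0) = 1, and u_T'(a) = iω·u_T(a). -/
/-!
`u_T` is `c cos(ω_ε(x - a)) + d sin(ω_ε(x - a))` for constants `c = √(1+ε)/D`, `d = i/D`.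
Such combinations are closed under differentiation, `(c, d) ↦ (ω_ε d, -ω_ε c)`, so
`u_T'' = -ω_ε² u_T = -ω²(1+ε) u_T`; at `x = a` only the cosine survives, giving
`u_T(a) = c` and `u_T'(a) = ω_ε d = iω c`.
-/

open Complex

noncomputable def trigComb (c d : ℂ) (k a : ℝ) (x : ℝ) : ℂ :=
  c * cos (k * (x - a)) + d * sin (k * (x - a))

section trigComb

variable (c d : ℂ) (k a : ℝ)

theorem hasDerivAt_trigComb (x : ℝ) :
    HasDerivAt (trigComb c d k a) (trigComb (k * d) (-(k * c)) k a x) x := by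
  have harg : HasDerivAt (fun x : ℝ => (k : ℂ) * ((x : ℂ) - a)) k x := by
    simpa using ((hasDerivAt_id x).ofReal_comp.sub_const (a : ℂ)).const_mul (k : ℂ)
  have hcos := (hasDerivAt_cos _).comp x harg
  have hsin := (hasDerivAt_sin _).comp x harg
  refine ((hcos.const_mul c).add (hsin.const_mul d)).congr_deriv ?_
  simp only [trigComb]
  ring

theorem deriv_trigComb :
    deriv (trigComb c d k a) = trigComb (k * d) (-(k * c)) k a :=
  funext fun x => (hasDerivAt_trigComb c d k a x).deriv

theorem deriv_deriv_trigComb (x : ℝ) :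
    deriv (deriv (trigComb c d k a)) x = -(k : ℂ) ^ 2 * trigComb c d k a x := by
  simp only [deriv_trigComb, trigComb]
  ring

theorem trigComb_self : trigComb c d k a a = c := by
  simp [trigComb]

end trigComb

theorem transparent_solution_general
    (ω a ε : ℝ) (hε : -1 < ε)
    (ωε : ℝ) (hωε : ωε = ω * Real.sqrt (1 + ε))
    (hD : (Real.sqrt (1 + ε) : ℂ) * Complex.cos (ωε * a) -
          Complex.I * Complex.sin (ωε * a) ≠ 0)
    (uT : ℝ → ℂ)
    (huT : ∀ x : ℝ, uT x =
      ((Real.sqrt (1 + ε) : ℂ) * Complex.cos (ωε * (x - a)) +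
        Complex.I * Complex.sin (ωε * (x - a))) /
      ((Real.sqrt (1 + ε) : ℂ) * Complex.cos (ωε * a) -
        Complex.I * Complex.sin (ωε * a))) :
    (∀ x ∈ Set.Ioo (0:ℝ) a,
        -(deriv (deriv uT)) x - (ω : ℂ) ^ 2 * (1 + ε) * uT x = 0) ∧
    uT 0 = 1 ∧
    deriv uT a = Complex.I * ω * uT a := by
  set s : ℂ := (Real.sqrt (1 + ε) : ℂ)
  set D : ℂ := s * cos (ωε * a) - I * sin (ωε * a)
  have hu : uT = trigComb (s / D) (I / D) ωε a := by
    funext x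
    rw [huT, trigComb]
    ring
  have hωε_sq : (ωε : ℂ) ^ 2 = ω ^ 2 * (1 + ε) := by
    have : ωε ^ 2 = ω ^ 2 * (1 + ε) := by rw [hωε, mul_pow, Real.sq_sqrt (by linarith)]
    exact_mod_cast this
  refine ⟨fun x _ => ?_, ?_, ?_⟩
  · rw [hu, deriv_deriv_trigComb, hωε_sq]
    ring
  · rw [huT, div_eq_one_iff_eq hD, ofReal_zero, zero_sub, mul_neg, cos_neg, sin_neg]
    ring
  · rw [hu, deriv_trigComb, trigComb_self, trigComb_self, hωε, ofReal_mul]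
    ring

/-- The explicit solution `u_T` of the transparent-boundary scattering problem with constant
perturbation `ε`: `-u_T'' - ω²(1+ε)u_T = 0` on `(0,a)`, `u_T(0) = 1`, `u_T'(a) = iω u_T(a)`. -/
theorem transparent_solution
    (ω a ε : ℝ) (hω : 0 < ω) (ha : 0 < a) (hε : -1 < ε)
    (ωε : ℝ) (hωε : ωε = ω * Real.sqrt (1 + ε))
    (hD : (Real.sqrt (1 + ε) : ℂ) * Complex.cos (ωε * a) -
          Complex.I * Complex.sin (ωε * a) ≠ 0)
    (uT : ℝ → ℂ)
    (huT : ∀ x : ℝ, uT x =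
      ((Real.sqrt (1 + ε) : ℂ) * Complex.cos (ωε * (x - a)) +
        Complex.I * Complex.sin (ωε * (x - a))) /
      ((Real.sqrt (1 + ε) : ℂ) * Complex.cos (ωε * a) -
        Complex.I * Complex.sin (ωε * a))) :
    (∀ x ∈ Set.Ioo (0:ℝ) a,
        -(deriv (deriv uT)) x - (ω : ℂ) ^ 2 * (1 + ε) * uT x = 0) ∧
    uT 0 = 1 ∧
    deriv uT a = Complex.I * ω * uT a :=
  transparent_solution_general ω a ε hε ωε hωε hD uT huT
end

section
/- With u_T as above, the perturbed transparent DtN number DtN_T(ε) := −u_T'(0) equals −iω − ωε·sin(ω_ε a)/(√(1+ε)·cos(ω_ε a) − i·sin(ω_ε a)). -/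
open Complex

theorem hasDerivAt_mul_cos_add_I_mul_sin (c k a : ℂ) (x : ℝ) :
    HasDerivAt (fun x : ℝ => c * cos (k * (x - a)) + I * sin (k * (x - a)))
      (k * (I * cos (k * (x - a)) - c * sin (k * (x - a)))) x := by
  have hphase : HasDerivAt (fun z : ℂ => k * (z - a)) k x := by
    simpa using ((hasDerivAt_id (x : ℂ)).sub_const a).const_mul k
  exact (((hphase.ccos.const_mul c).add (hphase.csin.const_mul I)).congr_deriv
    (by ring)).comp_ofReal

theorem transparent_DtN_number_general
    (ω a ε : ℝ) (hε : -1 < ε)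
    (ωε : ℝ) (hωε : ωε = ω * Real.sqrt (1 + ε))
    (hD : (Real.sqrt (1 + ε) : ℂ) * Complex.cos (ωε * a) -
          Complex.I * Complex.sin (ωε * a) ≠ 0)
    (uT : ℝ → ℂ)
    (huT : ∀ x : ℝ, uT x =
      ((Real.sqrt (1 + ε) : ℂ) * Complex.cos (ωε * (x - a)) +
        Complex.I * Complex.sin (ωε * (x - a))) /
      ((Real.sqrt (1 + ε) : ℂ) * Complex.cos (ωε * a) -
        Complex.I * Complex.sin (ωε * a))) :
    -(deriv uT 0) =
      -Complex.I * ω - (ω : ℂ) * ε * Complex.sin (ωε * a) /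
        ((Real.sqrt (1 + ε) : ℂ) * Complex.cos (ωε * a) -
          Complex.I * Complex.sin (ωε * a)) := by
  set c : ℂ := (Real.sqrt (1 + ε) : ℂ)
  have hc : c ^ 2 = 1 + ε := by
    rw [← ofReal_pow, Real.sq_sqrt (by linarith), ofReal_add, ofReal_one]
  have hk : (ωε : ℂ) = ω * c := by simp [c, hωε]
  have huT' : uT = fun x : ℝ => (c * cos (ωε * (x - a)) + I * sin (ωε * (x - a))) /
      (c * cos (ωε * a) - I * sin (ωε * a)) := funext huT
  have hderiv := (hasDerivAt_mul_cos_add_I_mul_sin c ωε a 0).div_const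
    (c * cos (ωε * a) - I * sin (ωε * a))
  rw [← huT'] at hderiv
  rw [hderiv.deriv]
  field_simp
  simp only [ofReal_zero, zero_sub, mul_neg, cos_neg, sin_neg, hk]
  -- `ωε (c sin + i cos) = iω D + ω ε sin`, since `ωε c = ω c² = ω (1 + ε)`
  linear_combination (-ω * sin (ω * c * a)) * hc - ω * sin (ω * c * a) * I_sq

/-- The perturbed transparent DtN number: `-u_T'(0) = -iω - ωε·sin(ω_ε a)/D`. -/
theorem transparent_DtN_number
    (ω a ε : ℝ) (hω : 0 < ω) (ha : 0 < a) (hε : -1 < ε)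
    (ωε : ℝ) (hωε : ωε = ω * Real.sqrt (1 + ε))
    (hD : (Real.sqrt (1 + ε) : ℂ) * Complex.cos (ωε * a) -
          Complex.I * Complex.sin (ωε * a) ≠ 0)
    (uT : ℝ → ℂ)
    (huT : ∀ x : ℝ, uT x =
      ((Real.sqrt (1 + ε) : ℂ) * Complex.cos (ωε * (x - a)) +
        Complex.I * Complex.sin (ωε * (x - a))) /
      ((Real.sqrt (1 + ε) : ℂ) * Complex.cos (ωε * a) -
        Complex.I * Complex.sin (ωε * a))) :
    -(deriv uT 0) =
      -Complex.I * ω - (ω : ℂ) * ε * Complex.sin (ωε * a) /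
        ((Real.sqrt (1 + ε) : ℂ) * Complex.cos (ωε * a) -
          Complex.I * Complex.sin (ωε * a)) :=
  transparent_DtN_number_general ω a ε hε ωε hωε hD uT huT
end

section
/- Define DtN_T(ε) := −iω − ωε·sin(ω_ε a)/(√(1+ε)·cos(ω_ε a) − i·sin(ω_ε a)) with ω_ε = ω√(1+ε). Then the relative error Δ_T(ε,ω) := |DtN_T(0) − DtN_T(ε)| / |DtN_T(0)| equals ε·|sin(ω_ε a)| / √(1 + ε·cos(ω_ε a)²). -/
open Complex

noncomputable def transparentDtN (ω a e : ℝ) : ℂ :=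
  -I * ω - (ω : ℂ) * e * Complex.sin (ω * Real.sqrt (1 + e) * a) /
    ((Real.sqrt (1 + e) : ℂ) * Complex.cos (ω * Real.sqrt (1 + e) * a) -
      I * Complex.sin (ω * Real.sqrt (1 + e) * a))

theorem transparentDtN_zero (ω a : ℝ) : transparentDtN ω a 0 = -I * ω := by
  simp [transparentDtN]

theorem transparentDtN_zero_sub (ω a e : ℝ) :
    transparentDtN ω a 0 - transparentDtN ω a e =
      (ω : ℂ) * e * Real.sin (ω * Real.sqrt (1 + e) * a) /
        ((Real.sqrt (1 + e) : ℂ) * Real.cos (ω * Real.sqrt (1 + e) * a) -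
          I * Real.sin (ω * Real.sqrt (1 + e) * a)) := by
  rw [transparentDtN_zero, transparentDtN]
  push_cast
  ring

theorem norm_sqrt_mul_cos_sub_I_mul_sin {e : ℝ} (he : -1 ≤ e) (θ : ℝ) :
    ‖(Real.sqrt (1 + e) : ℂ) * Real.cos θ - I * Real.sin θ‖ =
      Real.sqrt (1 + e * Real.cos θ ^ 2) := by
  have hsq : Real.sqrt (1 + e) ^ 2 = 1 + e := Real.sq_sqrt (by linarith)
  have key : (Real.sqrt (1 + e) * Real.cos θ) ^ 2 + (-Real.sin θ) ^ 2 =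
      1 + e * Real.cos θ ^ 2 := by
    rw [mul_pow, hsq, neg_sq, Real.sin_sq]
    ring
  rw [← key, ← Complex.norm_add_mul_I]
  push_cast
  ring_nf

theorem norm_transparentDtN_zero_sub (ω a : ℝ) {e : ℝ} (he : -1 ≤ e) :
    ‖transparentDtN ω a 0 - transparentDtN ω a e‖ =
      |ω| * |e| * |Real.sin (ω * Real.sqrt (1 + e) * a)| /
        Real.sqrt (1 + e * Real.cos (ω * Real.sqrt (1 + e) * a) ^ 2) := by
  rw [transparentDtN_zero_sub, norm_div, norm_sqrt_mul_cos_sub_I_mul_sin he, norm_mul,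
    norm_mul, norm_real, norm_real, norm_real, Real.norm_eq_abs, Real.norm_eq_abs,
    Real.norm_eq_abs]

theorem transparent_DtN_relative_error_general
    (ω a ε : ℝ) (hω : 0 < ω) (hε : 0 ≤ ε)
    (ωε : ℝ) (hωε : ωε = ω * Real.sqrt (1 + ε))
    (DtNT : ℝ → ℂ)
    (hDtN : ∀ e : ℝ, DtNT e =
      -Complex.I * ω - (ω : ℂ) * e *
        Complex.sin (ω * Real.sqrt (1 + e) * a) /
        ((Real.sqrt (1 + e) : ℂ) * Complex.cos (ω * Real.sqrt (1 + e) * a) -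
          Complex.I * Complex.sin (ω * Real.sqrt (1 + e) * a))) :
    ‖DtNT 0 - DtNT ε‖ / ‖DtNT 0‖ =
      ε * |Real.sin (ωε * a)| / Real.sqrt (1 + ε * Real.cos (ωε * a) ^ 2) := by
  obtain rfl : DtNT = transparentDtN ω a := funext hDtN
  have hnorm0 : ‖transparentDtN ω a 0‖ = ω := by
    simp [transparentDtN_zero, abs_of_pos hω]
  rw [hnorm0, norm_transparentDtN_zero_sub ω a (by linarith), ← hωε, abs_of_pos hω,
    abs_of_nonneg hε]
  field_simp

/-- The relative error of the transparent DtN number: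
`Δ_T(ε,ω) = ε·|sin(ω_ε a)| / √(1 + ε·cos²(ω_ε a))`. -/
theorem transparent_DtN_relative_error
    (ω a ε : ℝ) (hω : 0 < ω) (ha : 0 < a) (hε : 0 ≤ ε)
    (ωε : ℝ) (hωε : ωε = ω * Real.sqrt (1 + ε))
    (DtNT : ℝ → ℂ)
    (hDtN : ∀ e : ℝ, DtNT e =
      -Complex.I * ω - (ω : ℂ) * e *
        Complex.sin (ω * Real.sqrt (1 + e) * a) /
        ((Real.sqrt (1 + e) : ℂ) * Complex.cos (ω * Real.sqrt (1 + e) * a) -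
          Complex.I * Complex.sin (ω * Real.sqrt (1 + e) * a))) :
    ‖DtNT 0 - DtNT ε‖ / ‖DtNT 0‖ =
      ε * |Real.sin (ωε * a)| / Real.sqrt (1 + ε * Real.cos (ωε * a) ^ 2) :=
  transparent_DtN_relative_error_general ω a ε hω hε ωε hωε DtNT hDtN
end

section
/- Fix ω, a > 0 with sin(2ωa) ≠ 0 and cos(ωa) ≠ 0. Then as ε → 0⁺, |cot(ωa) − √(1+ε)·cot(√(1+ε)·ωa)| / |cot(ωa)| = ε·|−1/2 + ωa/sin(2ωa)| + O(ε²). -/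
open Filter Asymptotics

/-!
With `θ = ω a`, the function `φ ε = √(1 + ε) cot (√(1 + ε) θ)` is smooth near `ε = 0` because
`sin θ ≠ 0`, with `φ 0 = cot θ` and `φ' 0 = (cot θ - θ / sin² θ) / 2 = -(-1/2 + θ / sin 2θ) cot θ`.
Second-order Taylor expansion (via the mean value theorem) gives
`cot θ - φ ε = ε (-1/2 + θ / sin 2θ) cot θ + O(ε²)`; dividing by `cot θ` and using
`||u| - |v|| ≤ |u - v|` for `ε > 0` gives the claim.
-/

open Metric Real Topology

section Taylor

variable {E : Type*} [NormedAddCommGroup E] [NormedSpace ℝ E] {f f' : ℝ → E} {x₀ : ℝ}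

theorem isBigO_sub_pow_succ_of_hasDerivAt {n : ℕ}
    (hf : ∀ᶠ x in 𝓝 x₀, HasDerivAt f (f' x) x) (hf' : f' =O[𝓝 x₀] fun x ↦ (x - x₀) ^ n) :
    (fun x ↦ f x - f x₀) =O[𝓝 x₀] fun x ↦ (x - x₀) ^ (n + 1) := by
  obtain ⟨C, hC, hCf'⟩ := hf'.exists_nonneg
  obtain ⟨r, hr, hball⟩ := eventually_nhds_iff_ball.1 (hf.and hCf'.bound)
  refine .of_bound C (eventually_nhds_iff_ball.2 ⟨r, hr, fun x hx ↦ ?_⟩)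
  have hseg : segment ℝ x₀ x ⊆ ball x₀ r :=
    (convex_ball x₀ r).segment_subset (mem_ball_self hr) hx
  have hbound : ∀ y ∈ segment ℝ x₀ x, ‖f' y‖ ≤ C * ‖x - x₀‖ ^ n := fun y hy ↦ by
    calc ‖f' y‖ ≤ C * ‖(y - x₀) ^ n‖ := (hball y (hseg hy)).2
      _ ≤ C * ‖x - x₀‖ ^ n := by
        rw [norm_pow]; gcongr; exact norm_sub_le_of_mem_segment hy
  calc ‖f x - f x₀‖ ≤ C * ‖x - x₀‖ ^ n * ‖x - x₀‖ :=
        (convex_segment x₀ x).norm_image_sub_le_of_norm_hasDerivWithin_le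
          (fun y hy ↦ (hball y (hseg hy)).1.hasDerivWithinAt) hbound
          (left_mem_segment ℝ x₀ x) (right_mem_segment ℝ x₀ x)
    _ = C * ‖(x - x₀) ^ (n + 1)‖ := by rw [norm_pow, pow_succ, mul_assoc]

theorem ContDiffAt.isBigO_sub_sub_smul_deriv (hf : ContDiffAt ℝ 2 f x₀) :
    (fun x ↦ f x - f x₀ - (x - x₀) • deriv f x₀) =O[𝓝 x₀] fun x ↦ (x - x₀) ^ 2 := by
  have hderiv : ∀ᶠ x in 𝓝 x₀, HasDerivAt f (deriv f x) x :=
    (hf.eventually (by simp)).mono fun x hx ↦ (hx.differentiableAt (by simp)).hasDerivAt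
  have hderiv₂ : DifferentiableAt ℝ (deriv f) x₀ :=
    ((hf.fderiv_right (m := 1) le_rfl).differentiableAt one_ne_zero).clm_apply
      (differentiableAt_const 1)
  have key := isBigO_sub_pow_succ_of_hasDerivAt (n := 1)
    (f := fun x ↦ f x - (x - x₀) • deriv f x₀) (f' := fun x ↦ deriv f x - deriv f x₀)
    (hderiv.mono fun x hx ↦ by
      simpa using hx.fun_sub (((hasDerivAt_id x).sub_const x₀).smul_const (deriv f x₀)))
    (by simpa using hderiv₂.isBigO_sub)
  simpa [sub_right_comm] using key

end Taylor

section ScaledCotangent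

variable {θ : ℝ}

theorem hasDerivAt_mul_cos_div_sin (hθ : sin θ ≠ 0) :
    HasDerivAt (fun s ↦ s * (cos (s * θ) / sin (s * θ))) (cos θ / sin θ - θ / sin θ ^ 2) 1 := by
  have hlin : HasDerivAt (fun s : ℝ ↦ s * θ) θ 1 := by simpa using (hasDerivAt_id (1:ℝ)).mul_const θ
  have hθ' : sin (1 * θ) ≠ 0 := by rwa [one_mul]
  refine ((hasDerivAt_id' (1:ℝ)).fun_mul (hlin.cos.fun_div hlin.sin hθ')).congr_deriv ?_
  simp only [one_mul]
  field_simp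
  linear_combination -θ * sin_sq_add_cos_sq θ

theorem contDiffAt_sqrt_one_add_mul_cos_div_sin (hθ : sin θ ≠ 0) :
    ContDiffAt ℝ 2 (fun ε ↦ √(1 + ε) * (cos (√(1 + ε) * θ) / sin (√(1 + ε) * θ))) 0 := by
  have hsqrt : ContDiffAt ℝ 2 (fun ε : ℝ ↦ √(1 + ε)) 0 :=
    (contDiffAt_const.add contDiffAt_id).sqrt (by norm_num)
  have harg : ContDiffAt ℝ 2 (fun ε : ℝ ↦ √(1 + ε) * θ) 0 := hsqrt.mul contDiffAt_const
  exact hsqrt.mul (harg.cos.div harg.sin (by simpa using hθ))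

theorem hasDerivAt_sqrt_one_add_mul_cos_div_sin (hθ : sin θ ≠ 0) :
    HasDerivAt (fun ε ↦ √(1 + ε) * (cos (√(1 + ε) * θ) / sin (√(1 + ε) * θ)))
      ((cos θ / sin θ - θ / sin θ ^ 2) / 2) 0 := by
  have hsqrt : HasDerivAt (fun ε : ℝ ↦ √(1 + ε)) (1 / 2) 0 := by
    simpa using ((hasDerivAt_id (0:ℝ)).const_add 1).sqrt (by norm_num)
  have := (hasDerivAt_mul_cos_div_sin hθ).comp_of_eq 0 hsqrt (by simp)
  rwa [mul_one_div] at this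

end ScaledCotangent

theorem abs_abs_div_abs_sub_mul_abs_le {x K c ε : ℝ} (hK : K ≠ 0) (hε : 0 ≤ ε) :
    |(|x| / |K| - ε * |c|)| ≤ |K|⁻¹ * |x - ε * (c * K)| := by
  calc |(|x| / |K| - ε * |c|)| = |(|x / K| - |ε * c|)| := by rw [abs_div, abs_mul, abs_of_nonneg hε]
    _ ≤ |x / K - ε * c| := abs_abs_sub_abs_le_abs_sub _ _
    _ = |K|⁻¹ * |x - ε * (c * K)| := by rw [← abs_inv, ← abs_mul]; congr 1; field_simp

theorem reflecting_DtN_error_asymptotics_general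
    (ω a : ℝ)
    (hsin2 : Real.sin (2 * ω * a) ≠ 0) :
    (fun ε : ℝ =>
        |Real.cos (ω * a) / Real.sin (ω * a) -
          Real.sqrt (1 + ε) *
            (Real.cos (Real.sqrt (1 + ε) * ω * a) / Real.sin (Real.sqrt (1 + ε) * ω * a))| /
          |Real.cos (ω * a) / Real.sin (ω * a)| -
        ε * |(-1 / 2 : ℝ) + ω * a / Real.sin (2 * ω * a)|)
      =O[nhdsWithin (0:ℝ) (Set.Ioi 0)] (fun ε : ℝ => ε ^ 2) := by
  simp only [mul_assoc] at hsin2 ⊢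
  set θ := ω * a
  rw [sin_two_mul] at hsin2 ⊢
  obtain ⟨hsin, hcos⟩ : sin θ ≠ 0 ∧ cos θ ≠ 0 := by simpa using hsin2
  have htaylor := (contDiffAt_sqrt_one_add_mul_cos_div_sin hsin).isBigO_sub_sub_smul_deriv
  rw [(hasDerivAt_sqrt_one_add_mul_cos_div_sin hsin).deriv] at htaylor
  simp only [add_zero, sqrt_one, one_mul, sub_zero, smul_eq_mul] at htaylor
  refine IsBigO.trans (.of_bound |cos θ / sin θ|⁻¹ ?_) (htaylor.mono nhdsWithin_le_nhds)
  filter_upwards [self_mem_nhdsWithin] with ε (hε : 0 < ε)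
  refine (abs_abs_div_abs_sub_mul_abs_le (div_ne_zero hcos hsin) hε.le).trans_eq ?_
  rw [Real.norm_eq_abs]
  congr 1
  rw [← abs_neg]
  congr 1
  field_simp
  ring

/-- Asymptotics of the relative reflecting DtN error as `ε → 0⁺`:
`Δ_R(ε,ω) = ε·|-1/2 + ωa/sin(2ωa)| + O(ε²)`. -/
theorem reflecting_DtN_error_asymptotics
    (ω a : ℝ) (hω : 0 < ω) (ha : 0 < a)
    (hsin2 : Real.sin (2 * ω * a) ≠ 0)
    (hcos : Real.cos (ω * a) ≠ 0) :
    (fun ε : ℝ =>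
        |Real.cos (ω * a) / Real.sin (ω * a) -
          Real.sqrt (1 + ε) *
            (Real.cos (Real.sqrt (1 + ε) * ω * a) / Real.sin (Real.sqrt (1 + ε) * ω * a))| /
          |Real.cos (ω * a) / Real.sin (ω * a)| -
        ε * |(-1 / 2 : ℝ) + ω * a / Real.sin (2 * ω * a)|)
      =O[nhdsWithin (0:ℝ) (Set.Ioi 0)] (fun ε : ℝ => ε ^ 2) :=
  reflecting_DtN_error_asymptotics_general ω a hsin2
end
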